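/- arXiv:1804.00300 — 2 statements merged into one kernel-verified Lean document; each statement's English description precedes it below -/
import Mathlib

section
/- Assume f₀ = 0, g₀ = 0, π = 0 and the supports of f and g are contained in [−1, 1]. Let r : [−1, 1] → ℂ be continuous, a, b ∈ ℂ, and let v be twice continuously differentiable on [−1, 1] with −v''(t) + (g, v) f(t) + (f, v) g(t) = r(t) for all t ∈ [−1, 1], v'(−1) = a and v'(1) = b. Then b · conj(κ) = −∫_{−1}^{1} conj(ω(t)) r(t) dt, where κ = ω(1). -/
open MeasureTheory Complex Filter

/-- First antiderivative `h⁽⁻¹⁾(x) = ∫_{-∞}^x h(s) ds`. -/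
noncomputable def pd1 (h : ℝ → ℂ) (x : ℝ) : ℂ := ∫ s in Set.Iic x, h s

/-- Second antiderivative `h⁽⁻²⁾(x) = ∫_{-∞}^x (x - s) h(s) ds`. -/
noncomputable def pd2 (h : ℝ → ℂ) (x : ℝ) : ℂ := ∫ s in Set.Iic x, ((x : ℂ) - (s : ℂ)) * h s

/-- The `L²(ℝ)` inner product `⟨u, v⟩ = ∫ conj(u) v`, conjugate-linear in the first slot. -/
noncomputable def ip (u v : ℝ → ℂ) : ℂ := ∫ x : ℝ, (starRingEnd ℂ) (u x) * v x

/-- The `L²(ℝ)` norm. -/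
noncomputable def l2norm (u : ℝ → ℂ) : ℝ := Real.sqrt (∫ x : ℝ, ‖u x‖ ^ 2)

/-- The function `ω = e^{iθ} ‖g⁽⁻¹⁾‖ f⁽⁻²⁾ − ‖f⁽⁻¹⁾‖ g⁽⁻²⁾`,
where `θ = arg(⟨f⁽⁻¹⁾, g⁽⁻¹⁾⟩ + 1)`. -/
noncomputable def omegaFn (f g : ℝ → ℂ) (x : ℝ) : ℂ :=
  Complex.exp (Complex.I * (Complex.arg (ip (pd1 f) (pd1 g) + 1) : ℂ))
      * (l2norm (pd1 g) : ℂ) * pd2 f x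
    - (l2norm (pd1 f) : ℂ) * pd2 g x

/-- The `L²([-1,1])` inner product `(u, w) = ∫_{-1}^1 conj(u) w`. -/
noncomputable def ipI (u w : ℝ → ℂ) : ℂ := ∫ x in (-1 : ℝ)..1, (starRingEnd ℂ) (u x) * w x

open Set
section aux
variable {h : ℝ → ℂ}

lemma aux_ae_ne (c : ℝ) : ∀ᵐ s : ℝ, s ≠ c := by
  have h0 : (volume : Measure ℝ) {c} = 0 := measure_singleton c
  rw [ae_iff]
  convert h0 using 2
  ext s; simp

lemma aux_ae_zero_Iic (hz : ∀ s, s ∉ Icc (-1:ℝ) 1 → h s = 0) {x : ℝ} (hx : x ≤ -1) :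
    ∀ᵐ s ∂(volume.restrict (Iic x)), h s = 0 := by
  rw [ae_restrict_iff' measurableSet_Iic]
  filter_upwards [aux_ae_ne (-1:ℝ)] with s hs hsx
  exact hz s (fun hmem => hs (le_antisymm (hsx.trans hx) hmem.1))

lemma pd1_zero_le (hz : ∀ s, s ∉ Icc (-1:ℝ) 1 → h s = 0) {x : ℝ} (hx : x ≤ -1) :
    pd1 h x = 0 := by
  refine integral_eq_zero_of_ae ?_
  exact aux_ae_zero_Iic hz hx

lemma pd1_zero_ge (hi : Integrable h) (hz : ∀ s, s ∉ Icc (-1:ℝ) 1 → h s = 0)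
    (h0 : (∫ y : ℝ, h y) = 0) {x : ℝ} (hx : 1 ≤ x) : pd1 h x = 0 := by
  have hcompl : ∫ s in (Iic x)ᶜ, h s = 0 := by
    refine setIntegral_eq_zero_of_forall_eq_zero (fun s hs => hz s ?_)
    rw [compl_Iic] at hs
    exact fun hmem => absurd hmem.2 (not_le.2 (hx.trans_lt hs))
  have h2 := integral_add_compl (s := Iic x) measurableSet_Iic hi (f := h)
  rw [hcompl, add_zero, h0] at h2
  exact h2

lemma pd1_Ioc (hi : Integrable h) (hz : ∀ s, s ∉ Icc (-1:ℝ) 1 → h s = 0) {x : ℝ}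
    (hx : (-1:ℝ) ≤ x) : pd1 h x = ∫ s in Ioc (-1:ℝ) x, h s := by
  unfold pd1
  rw [← Iic_union_Ioc_eq_Iic hx,
    setIntegral_union (Iic_disjoint_Ioc le_rfl) measurableSet_Ioc hi.integrableOn hi.integrableOn,
    integral_eq_zero_of_ae (aux_ae_zero_Iic hz le_rfl), zero_add]

lemma pd1_cont (hi : Integrable h) (hz : ∀ s, s ∉ Icc (-1:ℝ) 1 → h s = 0) :
    Continuous (pd1 h) := by
  have heq : pd1 h = fun x => ∫ s in (-1:ℝ)..x, h s := by
    funext x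
    rcases le_total (-1:ℝ) x with hx | hx
    · rw [pd1_Ioc hi hz hx, intervalIntegral.integral_of_le hx]
    · rw [pd1_zero_le hz hx, intervalIntegral.integral_symm,
        intervalIntegral.integral_of_le hx]
      have hae : ∀ᵐ s ∂(volume.restrict (Ioc x (-1:ℝ))), h s = 0 := by
        rw [ae_restrict_iff' measurableSet_Ioc]
        filter_upwards [aux_ae_ne (-1:ℝ)] with s hs hsx
        exact hz s (fun hmem => hs (le_antisymm hsx.2 hmem.1))
      rw [integral_eq_zero_of_ae hae, neg_zero]
  rw [heq]
  exact intervalIntegral.continuous_primitive (fun a b => hi.intervalIntegrable) _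

end aux

lemma aux_fub (φ ψ : ℝ → ℂ) {x : ℝ}
    (hφ : IntegrableOn φ (Ioc (-1:ℝ) x)) (hψ : IntegrableOn ψ (Ioc (-1:ℝ) x)) :
    ∫ t in Ioc (-1:ℝ) x, (∫ s in Ioc (-1:ℝ) t, φ s) * ψ t
      = ∫ s in Ioc (-1:ℝ) x, φ s * ∫ t in Ioc s x, ψ t := by
  have hmeas : MeasurableSet {p : ℝ × ℝ | p.2 ≤ p.1} :=
    measurableSet_le measurable_snd measurable_fst
  have hint : Integrable (fun p : ℝ × ℝ => ψ p.1 * φ p.2)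
      ((volume.restrict (Ioc (-1:ℝ) x)).prod (volume.restrict (Ioc (-1:ℝ) x))) :=
    Integrable.mul_prod hψ hφ
  have hFi : Integrable (Function.uncurry fun t s => if s ≤ t then φ s * ψ t else 0)
      ((volume.restrict (Ioc (-1:ℝ) x)).prod (volume.restrict (Ioc (-1:ℝ) x))) := by
    refine (hint.indicator hmeas).congr ?_
    refine Filter.EventuallyEq.of_eq (funext fun p => ?_)
    simp only [Set.indicator_apply, Function.uncurry, Set.mem_setOf_eq]
    split <;> ring
  have hswap := MeasureTheory.integral_integral_swap
    (f := fun t s => if s ≤ t then φ s * ψ t else 0) hFi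
  have hL : (∫ t in Ioc (-1:ℝ) x, ∫ s in Ioc (-1:ℝ) x,
        (if s ≤ t then φ s * ψ t else 0))
      = ∫ t in Ioc (-1:ℝ) x, (∫ s in Ioc (-1:ℝ) t, φ s) * ψ t := by
    refine setIntegral_congr_fun measurableSet_Ioc (fun t ht => ?_)
    have e1 : (fun s => if s ≤ t then φ s * ψ t else 0)
        = fun s => (Iic t).indicator φ s * ψ t := by
      funext s; simp only [Set.indicator_apply, Set.mem_Iic]; split <;> ring
    rw [e1, integral_mul_const]
    congr 1
    rw [setIntegral_indicator measurableSet_Iic, Set.Ioc_inter_Iic,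
      inf_eq_right.2 ht.2]
  have hR : (∫ s in Ioc (-1:ℝ) x, ∫ t in Ioc (-1:ℝ) x,
        (if s ≤ t then φ s * ψ t else 0))
      = ∫ s in Ioc (-1:ℝ) x, φ s * ∫ t in Ioc s x, ψ t := by
    refine setIntegral_congr_fun measurableSet_Ioc (fun s hs => ?_)
    have e1 : (fun t => if s ≤ t then φ s * ψ t else 0)
        = fun t => φ s * (Ici s).indicator ψ t := by
      funext t; simp only [Set.indicator_apply, Set.mem_Ici]; split <;> ring
    rw [e1, integral_const_mul]
    congr 1
    rw [setIntegral_indicator measurableSet_Ici]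
    have e2 : Ioc (-1:ℝ) x ∩ Ici s = Icc s x := by
      ext y
      simp only [Set.mem_inter_iff, Set.mem_Ioc, Set.mem_Ici, Set.mem_Icc]
      constructor
      · rintro ⟨⟨_, h2⟩, h3⟩; exact ⟨h3, h2⟩
      · rintro ⟨h1, h2⟩; exact ⟨⟨lt_of_lt_of_le hs.1 h1, h2⟩, h1⟩
    rw [e2, integral_Icc_eq_integral_Ioc]
  rw [← hL, ← hR]
  exact hswap

section aux2
variable {h : ℝ → ℂ}

lemma aux_pd2_integrand_int (hi : Integrable h) (hz : ∀ s, s ∉ Icc (-1:ℝ) 1 → h s = 0)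
    (x : ℝ) : Integrable (fun s : ℝ => ((x:ℂ) - (s:ℂ)) * h s) := by
  refine (hi.norm.const_mul (|x|+1)).mono' ?_ ?_
  · exact ((continuous_const.sub Complex.continuous_ofReal).aestronglyMeasurable).mul
      hi.aestronglyMeasurable
  · refine Filter.Eventually.of_forall (fun s => ?_)
    by_cases hs : s ∈ Icc (-1:ℝ) 1
    · rw [norm_mul]
      have h1 : ‖(x:ℂ) - (s:ℂ)‖ ≤ |x| + 1 := by
        have : ((x:ℂ) - (s:ℂ)) = ((x - s : ℝ) : ℂ) := by push_cast; ring
        rw [this, Complex.norm_real]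
        have := abs_sub_abs_le_abs_sub x s
        have h2 : |s| ≤ 1 := abs_le.2 ⟨hs.1, hs.2⟩
        calc |x - s| ≤ |x| + |s| := abs_sub x s
          _ ≤ |x| + 1 := by linarith
      exact mul_le_mul_of_nonneg_right h1 (norm_nonneg _)
    · rw [hz s hs, mul_zero, norm_zero]
      positivity

lemma pd2_zero_le (hz : ∀ s, s ∉ Icc (-1:ℝ) 1 → h s = 0) {x : ℝ} (hx : x ≤ -1) :
    pd2 h x = 0 := by
  have hae : ∀ᵐ s : ℝ ∂(volume.restrict (Iic x)), ((x:ℂ) - (s:ℂ)) * h s = 0 := by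
    rw [ae_restrict_iff' measurableSet_Iic]
    filter_upwards [aux_ae_ne (-1:ℝ)] with s hs hsx
    rw [hz s (fun hmem => hs (le_antisymm (hsx.trans hx) hmem.1)), mul_zero]
  exact integral_eq_zero_of_ae hae

lemma pd2_eq (hi : Integrable h) (hz : ∀ s, s ∉ Icc (-1:ℝ) 1 → h s = 0) (x : ℝ) :
    pd2 h x = ∫ t in (-1:ℝ)..x, pd1 h t := by
  rcases le_total (-1:ℝ) x with hx | hx
  · rw [intervalIntegral.integral_of_le hx]
    have e1 : ∫ t in Ioc (-1:ℝ) x, pd1 h t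
        = ∫ t in Ioc (-1:ℝ) x, (∫ s in Ioc (-1:ℝ) t, h s) * (1:ℂ) := by
      refine setIntegral_congr_fun measurableSet_Ioc (fun t ht => ?_)
      rw [pd1_Ioc hi hz ht.1.le, mul_one]
    have e2 := aux_fub (x := x) h (fun _ => (1:ℂ)) hi.integrableOn
      (integrableOn_const measure_Ioc_lt_top.ne)
    have e3 : ∫ s in Ioc (-1:ℝ) x, h s * ∫ t in Ioc s x, (1:ℂ)
        = ∫ s in Ioc (-1:ℝ) x, ((x:ℂ) - (s:ℂ)) * h s := by
      refine setIntegral_congr_fun measurableSet_Ioc (fun s hs => ?_)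
      rw [setIntegral_const, Real.volume_real_Ioc_of_le hs.2]
      rw [real_smul, Complex.ofReal_sub, mul_one]
      ring
    have e4 : pd2 h x = ∫ s in Ioc (-1:ℝ) x, ((x:ℂ) - (s:ℂ)) * h s := by
      unfold pd2
      rw [← Iic_union_Ioc_eq_Iic hx,
        setIntegral_union (Iic_disjoint_Ioc le_rfl) measurableSet_Ioc
          (aux_pd2_integrand_int hi hz x).integrableOn
          (aux_pd2_integrand_int hi hz x).integrableOn]
      have hae : ∀ᵐ s : ℝ ∂(volume.restrict (Iic (-1:ℝ))), ((x:ℂ) - (s:ℂ)) * h s = 0 := by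
        rw [ae_restrict_iff' measurableSet_Iic]
        filter_upwards [aux_ae_ne (-1:ℝ)] with s hs hsx
        rw [hz s (fun hmem => hs (le_antisymm hsx hmem.1)), mul_zero]
      rw [integral_eq_zero_of_ae hae, zero_add]
    exact e4.trans (e3.symm.trans (e2.symm.trans e1.symm))
  · rw [pd2_zero_le hz hx, intervalIntegral.integral_symm,
      intervalIntegral.integral_of_le hx,
      setIntegral_eq_zero_of_forall_eq_zero (fun t ht => pd1_zero_le hz ht.2), neg_zero]

lemma pd2_hasDeriv (hi : Integrable h) (hz : ∀ s, s ∉ Icc (-1:ℝ) 1 → h s = 0) (x : ℝ) :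
    HasDerivAt (pd2 h) (pd1 h x) x := by
  have heq : pd2 h = fun y => ∫ t in (-1:ℝ)..y, pd1 h t := funext (pd2_eq hi hz)
  rw [heq]
  exact intervalIntegral.integral_hasDerivAt_right
    ((pd1_cont hi hz).intervalIntegrable _ _)
    ((pd1_cont hi hz).stronglyMeasurableAtFilter _ _)
    (pd1_cont hi hz).continuousAt

lemma pd2_cont (hi : Integrable h) (hz : ∀ s, s ∉ Icc (-1:ℝ) 1 → h s = 0) :
    Continuous (pd2 h) :=
  continuous_iff_continuousAt.2 (fun x => (pd2_hasDeriv hi hz x).continuousAt)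

end aux2

section aux3
variable {h : ℝ → ℂ}

lemma aux_conj_int (hi : Integrable h) : Integrable (fun s => (starRingEnd ℂ) (h s)) := by
  refine hi.norm.mono' ?_ ?_
  · exact (continuous_star.comp_aestronglyMeasurable hi.aestronglyMeasurable)
  · exact Filter.Eventually.of_forall (fun s => by simp)

lemma partsB (hi : Integrable h) (hz : ∀ s, s ∉ Icc (-1:ℝ) 1 → h s = 0)
    (h0 : (∫ y : ℝ, h y) = 0)
    (v v' : ℝ → ℂ)
    (hv : ∀ t ∈ Icc (-1:ℝ) 1, HasDerivWithinAt v (v' t) (Icc (-1:ℝ) 1) t)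
    (hv'c : ContinuousOn v' (Icc (-1:ℝ) 1)) :
    ∫ t in Ioc (-1:ℝ) 1, (starRingEnd ℂ) (pd1 h t) * v' t
      = -∫ t in Ioc (-1:ℝ) 1, (starRingEnd ℂ) (h t) * v t := by
  have hvcont : ContinuousOn v (Icc (-1:ℝ) 1) := fun t ht => (hv t ht).continuousWithinAt
  have hconj_int : Integrable (fun s => (starRingEnd ℂ) (h s)) := aux_conj_int hi
  have hFTC : ∀ s ∈ Ioc (-1:ℝ) 1, ∫ t in Ioc s 1, v' t = v 1 - v s := by
    intro s hs
    rw [← intervalIntegral.integral_of_le hs.2]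
    refine intervalIntegral.integral_eq_sub_of_hasDeriv_right_of_le hs.2
      (hvcont.mono (Icc_subset_Icc hs.1.le le_rfl)) (fun t ht => ?_) ?_
    · have htK : t ∈ Icc (-1:ℝ) 1 := ⟨(hs.1.trans ht.1).le, ht.2.le⟩
      exact ((hv t htK).hasDerivAt (Icc_mem_nhds (hs.1.trans ht.1) ht.2)).hasDerivWithinAt
    · have : uIcc s 1 = Icc s 1 := uIcc_of_le hs.2
      exact (hv'c.mono (by rw [this]; exact Icc_subset_Icc hs.1.le le_rfl)).intervalIntegrable
  have hL : ∫ t in Ioc (-1:ℝ) 1, (starRingEnd ℂ) (pd1 h t) * v' t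
      = ∫ t in Ioc (-1:ℝ) 1, (∫ s in Ioc (-1:ℝ) t, (starRingEnd ℂ) (h s)) * v' t := by
    refine setIntegral_congr_fun measurableSet_Ioc (fun t ht => ?_)
    rw [integral_conj, ← pd1_Ioc hi hz ht.1.le]
  rw [hL, aux_fub (fun s => (starRingEnd ℂ) (h s)) v' hconj_int.integrableOn
    ((hv'c.integrableOn_Icc).mono_set Ioc_subset_Icc_self)]
  have hR : ∫ s in Ioc (-1:ℝ) 1, (starRingEnd ℂ) (h s) * ∫ t in Ioc s 1, v' t
      = ∫ s in Ioc (-1:ℝ) 1, ((starRingEnd ℂ) (h s) * v 1 - (starRingEnd ℂ) (h s) * v s) := by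
    refine setIntegral_congr_fun measurableSet_Ioc (fun s hs => ?_)
    rw [hFTC s hs, mul_sub]
  rw [hR]
  obtain ⟨C, hC⟩ := isCompact_Icc.exists_bound_of_continuousOn hvcont
  have i1 : Integrable (fun s => (starRingEnd ℂ) (h s) * v 1)
      (volume.restrict (Ioc (-1:ℝ) 1)) := hconj_int.restrict.mul_const _
  have i2 : Integrable (fun s => (starRingEnd ℂ) (h s) * v s)
      (volume.restrict (Ioc (-1:ℝ) 1)) := by
    refine ((hi.norm.const_mul C).restrict).mono' ?_ ?_
    · refine AEStronglyMeasurable.mul ?_ ?_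
      · exact (continuous_star.comp_aestronglyMeasurable hi.aestronglyMeasurable).restrict
      · exact ((hvcont.aestronglyMeasurable measurableSet_Icc).mono_measure
          (Measure.restrict_mono Ioc_subset_Icc_self le_rfl))
    · rw [ae_restrict_iff' measurableSet_Ioc]
      refine Filter.Eventually.of_forall (fun s hs => ?_)
      rw [norm_mul, RCLike.norm_conj, mul_comm C _]
      exact mul_le_mul_of_nonneg_left (hC s (Ioc_subset_Icc_self hs)) (norm_nonneg _)
  rw [integral_sub i1 i2, integral_mul_const]
  have hmean : ∫ s in Ioc (-1:ℝ) 1, (starRingEnd ℂ) (h s) = 0 := by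
    rw [integral_conj]
    have : ∫ s in Ioc (-1:ℝ) 1, h s = ∫ s, h s := by
      rw [← integral_Icc_eq_integral_Ioc]
      exact setIntegral_eq_integral_of_forall_compl_eq_zero hz
    rw [this, h0, map_zero]
  rw [hmean, zero_mul, zero_sub]

end aux3


section aux4
variable {h h₁ h₂ : ℝ → ℂ}

lemma aux_pd1_ip (hi₁ : Integrable h₁) (hz₁ : ∀ s, s ∉ Icc (-1:ℝ) 1 → h₁ s = 0)
    (h0₁ : (∫ y : ℝ, h₁ y) = 0)
    (hi₂ : Integrable h₂) (hz₂ : ∀ s, s ∉ Icc (-1:ℝ) 1 → h₂ s = 0)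
    (h0₂ : (∫ y : ℝ, h₂ y) = 0) :
    ∫ t in Ioc (-1:ℝ) 1, (starRingEnd ℂ) (pd1 h₁ t) * pd1 h₂ t = ip (pd1 h₁) (pd1 h₂) := by
  refine setIntegral_eq_integral_of_forall_compl_eq_zero (fun t ht => ?_)
  rcases le_or_gt t (-1:ℝ) with h | h
  · rw [pd1_zero_le hz₁ h, map_zero, zero_mul]
  · have h1 : (1:ℝ) ≤ t := by
      by_contra hc
      exact ht ⟨h, (not_le.1 hc).le⟩
    rw [pd1_zero_ge hi₁ hz₁ h0₁ h1, map_zero, zero_mul]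

lemma partsC (hi₁ : Integrable h₁) (hz₁ : ∀ s, s ∉ Icc (-1:ℝ) 1 → h₁ s = 0)
    (h0₁ : (∫ y : ℝ, h₁ y) = 0)
    (hi₂ : Integrable h₂) (hz₂ : ∀ s, s ∉ Icc (-1:ℝ) 1 → h₂ s = 0)
    (h0₂ : (∫ y : ℝ, h₂ y) = 0) :
    ∫ t in Ioc (-1:ℝ) 1, (starRingEnd ℂ) (pd2 h₁ t) * h₂ t
      = -(ip (pd1 h₁) (pd1 h₂)) := by
  have hB := partsB hi₂ hz₂ h0₂ (pd2 h₁) (pd1 h₁)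
    (fun t _ => (pd2_hasDeriv hi₁ hz₁ t).hasDerivWithinAt)
    (pd1_cont hi₁ hz₁).continuousOn
  have hB' := congrArg (starRingEnd ℂ) hB
  rw [map_neg, ← integral_conj, ← integral_conj] at hB'
  have e1 : ∫ (x : ℝ) in Ioc (-1:ℝ) 1, (starRingEnd ℂ) ((starRingEnd ℂ) (pd1 h₂ x) * pd1 h₁ x)
      = ∫ (x : ℝ) in Ioc (-1:ℝ) 1, (starRingEnd ℂ) (pd1 h₁ x) * pd1 h₂ x := by
    refine setIntegral_congr_fun measurableSet_Ioc (fun t _ => ?_)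
    rw [map_mul, Complex.conj_conj]; ring
  have e2 : ∫ (x : ℝ) in Ioc (-1:ℝ) 1, (starRingEnd ℂ) ((starRingEnd ℂ) (h₂ x) * pd2 h₁ x)
      = ∫ (x : ℝ) in Ioc (-1:ℝ) 1, (starRingEnd ℂ) (pd2 h₁ x) * h₂ x := by
    refine setIntegral_congr_fun measurableSet_Ioc (fun t _ => ?_)
    rw [map_mul, Complex.conj_conj]; ring
  rw [e1, e2, aux_pd1_ip hi₁ hz₁ h0₁ hi₂ hz₂ h0₂] at hB'
  rw [eq_comm, hB', neg_neg]

end aux4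

lemma aux_ip_self (u : ℝ → ℂ) : ip u u = ((l2norm u : ℝ) : ℂ)^2 := by
  unfold ip l2norm
  have e1 : ∀ x : ℝ, (starRingEnd ℂ) (u x) * u x = ((‖u x‖^2 : ℝ) : ℂ) := by
    intro x
    rw [RCLike.conj_mul]
    norm_cast
  have e2 : ∫ x : ℝ, (starRingEnd ℂ) (u x) * u x = ((∫ x : ℝ, ‖u x‖^2 : ℝ) : ℂ) := by
    rw [show ((∫ x : ℝ, ‖u x‖^2 : ℝ) : ℂ) = ∫ x : ℝ, ((‖u x‖^2 : ℝ) : ℂ) from (integral_ofReal).symm]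
    exact integral_congr_ae (Filter.Eventually.of_forall (fun x => e1 x))
  rw [e2]
  norm_cast
  rw [Real.sq_sqrt]
  exact integral_nonneg (fun x => sq_nonneg _)

lemma aux_ip_symm (u w : ℝ → ℂ) : ip w u = (starRingEnd ℂ) (ip u w) := by
  unfold ip
  rw [← integral_conj]
  refine integral_congr_ae (Filter.Eventually.of_forall (fun x => ?_))
  simp only [map_mul, Complex.conj_conj]; ring

theorem solvability_second_condition
    (f g : ℝ → ℂ)
    (hfi : Integrable f) (hgi : Integrable g)
    (hf2 : MemLp f 2) (hg2 : MemLp g 2)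
    (hfc : tsupport f ⊆ Set.Icc (-1 : ℝ) 1) (hgc : tsupport g ⊆ Set.Icc (-1 : ℝ) 1)
    (hf0 : (∫ y : ℝ, f y) = 0) (hg0 : (∫ y : ℝ, g y) = 0)
    (hpi : l2norm (pd1 f) * l2norm (pd1 g)
        - ‖ip (pd1 f) (pd1 g) + 1‖ = 0)
    (r : ℝ → ℂ) (hr : ContinuousOn r (Set.Icc (-1 : ℝ) 1))
    (a b : ℂ)
    (v v' v'' : ℝ → ℂ)
    (hv' : ∀ t ∈ Set.Icc (-1 : ℝ) 1, HasDerivWithinAt v (v' t) (Set.Icc (-1 : ℝ) 1) t)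
    (hv'' : ∀ t ∈ Set.Icc (-1 : ℝ) 1, HasDerivWithinAt v' (v'' t) (Set.Icc (-1 : ℝ) 1) t)
    (hv''cont : ContinuousOn v'' (Set.Icc (-1 : ℝ) 1))
    (heq : ∀ t ∈ Set.Icc (-1 : ℝ) 1, -(v'' t) + ipI g v * f t + ipI f v * g t = r t)
    (ha : v' (-1) = a) (hb : v' 1 = b) :
    b * (starRingEnd ℂ) (omegaFn f g 1)
      = -∫ t in (-1 : ℝ)..1, (starRingEnd ℂ) (omegaFn f g t) * r t := by
  have hzf : ∀ s, s ∉ Set.Icc (-1:ℝ) 1 → f s = 0 :=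
    fun s hs => image_eq_zero_of_notMem_tsupport (fun h' => hs (hfc h'))
  have hzg : ∀ s, s ∉ Set.Icc (-1:ℝ) 1 → g s = 0 :=
    fun s hs => image_eq_zero_of_notMem_tsupport (fun h' => hs (hgc h'))
  -- notation
  set P : ℂ := ip (pd1 f) (pd1 g) with hP
  set e : ℂ := Complex.exp (Complex.I * (Complex.arg (P + 1) : ℂ)) with he
  set Nf : ℂ := (l2norm (pd1 f) : ℂ) with hNf
  set Ng : ℂ := (l2norm (pd1 g) : ℂ) with hNg
  set A : ℂ := (starRingEnd ℂ) e with hA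
  set W : ℝ → ℂ := omegaFn f g with hWdef
  have hWeq : ∀ x, W x = e * Ng * pd2 f x - Nf * pd2 g x := fun x => rfl
  set W' : ℝ → ℂ := fun t => e * Ng * pd1 f t - Nf * pd1 g t with hW'def
  -- derivatives and continuity
  have hWd : ∀ t, HasDerivAt W (W' t) t := by
    intro t
    exact ((pd2_hasDeriv hfi hzf t).const_mul (e * Ng)).sub
      ((pd2_hasDeriv hgi hzg t).const_mul Nf)
  have hWc : ∀ t, HasDerivAt (fun t => (starRingEnd ℂ) (W t)) ((starRingEnd ℂ) (W' t)) t := by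
    intro t
    simp only [starRingEnd_apply]
    exact (hWd t).star
  have hWcont : Continuous W := by
    rw [funext hWeq]
    exact (continuous_const.mul (pd2_cont hfi hzf)).sub
      (continuous_const.mul (pd2_cont hgi hzg))
  have hW'cont : Continuous W' := by
    rw [hW'def]
    exact (continuous_const.mul (pd1_cont hfi hzf)).sub
      (continuous_const.mul (pd1_cont hgi hzg))
  have hvc : ContinuousOn v (Set.Icc (-1:ℝ) 1) := fun t ht => (hv' t ht).continuousWithinAt
  have hv'c : ContinuousOn v' (Set.Icc (-1:ℝ) 1) := fun t ht => (hv'' t ht).continuousWithinAt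
  have hWm1 : W (-1) = 0 := by
    rw [hWeq, pd2_zero_le hzf le_rfl, pd2_zero_le hzg le_rfl]; ring
  -- integrability toolkit
  have mkint : ∀ (u w : ℝ → ℂ), Continuous u → Integrable w →
      Integrable (fun t => (starRingEnd ℂ) (u t) * w t)
        (volume.restrict (Set.Ioc (-1:ℝ) 1)) := by
    intro u w hu hw
    obtain ⟨C, hC⟩ := isCompact_Icc.exists_bound_of_continuousOn
      (hu.continuousOn : ContinuousOn u (Set.Icc (-1:ℝ) 1))
    refine ((hw.norm.const_mul C).restrict).mono' ?_ ?_
    · exact ((continuous_star.comp hu).aestronglyMeasurable.restrict).mul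
        hw.aestronglyMeasurable.restrict
    · rw [ae_restrict_iff' measurableSet_Ioc]
      refine Filter.Eventually.of_forall (fun t ht => ?_)
      rw [norm_mul, RCLike.norm_conj]
      exact mul_le_mul_of_nonneg_right (hC t (Set.Ioc_subset_Icc_self ht)) (norm_nonneg _)
  have mkint2 : ∀ (u w : ℝ → ℂ), Continuous u → ContinuousOn w (Set.Icc (-1:ℝ) 1) →
      Integrable (fun t => (starRingEnd ℂ) (u t) * w t)
        (volume.restrict (Set.Ioc (-1:ℝ) 1)) := by
    intro u w hu hw
    exact (((continuous_star.comp hu).continuousOn.mul hw).integrableOn_Icc).mono_set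
      Set.Ioc_subset_Icc_self
  -- interval integral to set integral
  have hIoc : ∀ (u : ℝ → ℂ), (∫ t in (-1:ℝ)..1, u t) = ∫ t in Set.Ioc (-1:ℝ) 1, u t :=
    fun u => intervalIntegral.integral_of_le (by norm_num)
  have hNfc : (starRingEnd ℂ) Nf = Nf := by rw [hNf, Complex.conj_ofReal]
  have hNgc : (starRingEnd ℂ) Ng = Ng := by rw [hNg, Complex.conj_ofReal]
  -- the central algebraic facts
  have habs : Nf * Ng = ((‖P + 1‖ : ℝ) : ℂ) := by
    rw [hNf, hNg, ← Complex.ofReal_mul]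
    exact_mod_cast congrArg (fun t : ℝ => (t : ℂ)) (sub_eq_zero.1 hpi)
  have hze : ((‖P + 1‖ : ℝ) : ℂ) * e = P + 1 := by
    rw [he, mul_comm Complex.I]
    exact Complex.norm_mul_exp_arg_mul_I (P + 1)
  have hee : e * A = 1 := by
    rw [hA, he, ← Complex.exp_conj, ← Complex.exp_add]
    have : Complex.I * (Complex.arg (P + 1) : ℂ)
        + (starRingEnd ℂ) (Complex.I * (Complex.arg (P + 1) : ℂ)) = 0 := by
      rw [map_mul, Complex.conj_I, Complex.conj_ofReal]; ring
    rw [this, Complex.exp_zero]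
  have hAz : A * (P + 1) = ((‖P + 1‖ : ℝ) : ℂ) := by
    linear_combination (-A) * hze + ((‖P + 1‖ : ℝ) : ℂ) * hee
  have hconjz : ((‖P + 1‖ : ℝ) : ℂ) * A = (starRingEnd ℂ) P + 1 := by
    have h3 := congrArg (starRingEnd ℂ) hze
    simpa only [map_mul, map_add, map_one, Complex.conj_ofReal, ← hA] using h3
  -- values of the inner products
  have hipff : ip (pd1 f) (pd1 f) = Nf^2 := aux_ip_self (pd1 f)
  have hipgg : ip (pd1 g) (pd1 g) = Ng^2 := aux_ip_self (pd1 g)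
  have hipgf : ip (pd1 g) (pd1 f) = (starRingEnd ℂ) P := aux_ip_symm (pd1 f) (pd1 g)
  -- Step: ∫ conj W f and ∫ conj W g
  have hWf0 : ∀ (w : ℝ → ℂ), (fun t => (starRingEnd ℂ) (W t) * w t)
      = fun t => A * Ng * ((starRingEnd ℂ) (pd2 f t) * w t)
          - Nf * ((starRingEnd ℂ) (pd2 g t) * w t) := by
    intro w; funext t
    rw [hWeq t]
    simp only [map_sub, map_mul, hNfc, hNgc, ← hA]
    ring
  have hsplit : ∀ (w : ℝ → ℂ), Integrable w →
      (∫ t in Set.Ioc (-1:ℝ) 1, (starRingEnd ℂ) (W t) * w t)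
        = A * Ng * (∫ t in Set.Ioc (-1:ℝ) 1, (starRingEnd ℂ) (pd2 f t) * w t)
          - Nf * (∫ t in Set.Ioc (-1:ℝ) 1, (starRingEnd ℂ) (pd2 g t) * w t) := by
    intro w hw
    rw [hWf0 w, integral_sub ((mkint (pd2 f) w (pd2_cont hfi hzf) hw).const_mul _)
      ((mkint (pd2 g) w (pd2_cont hgi hzg) hw).const_mul _),
      integral_const_mul, integral_const_mul]
  have hIf : (∫ t in Set.Ioc (-1:ℝ) 1, (starRingEnd ℂ) (W t) * f t) = -Nf := by
    rw [hsplit f hfi, partsC hfi hzf hf0 hfi hzf hf0, partsC hgi hzg hg0 hfi hzf hf0,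
      hipff, hipgf]
    linear_combination (-(A * Nf)) * habs + (-Nf) * hconjz
  have hIg : (∫ t in Set.Ioc (-1:ℝ) 1, (starRingEnd ℂ) (W t) * g t) = A * Ng := by
    rw [hsplit g hgi, partsC hfi hzf hf0 hgi hzg hg0, partsC hgi hzg hg0 hgi hzg hg0,
      hipgg]
    have hPfg : ip (pd1 f) (pd1 g) = P := hP.symm
    rw [hPfg]
    linear_combination Ng * habs + (-Ng) * hAz
  -- Step: ∫ conj W' v'
  have hW'v' : (∫ t in Set.Ioc (-1:ℝ) 1, (starRingEnd ℂ) (W' t) * v' t)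
      = A * Ng * (-(ipI f v)) - Nf * (-(ipI g v)) := by
    have e0 : (fun t => (starRingEnd ℂ) (W' t) * v' t)
        = fun t => A * Ng * ((starRingEnd ℂ) (pd1 f t) * v' t)
            - Nf * ((starRingEnd ℂ) (pd1 g t) * v' t) := by
      funext t
      simp only [hW'def, map_sub, map_mul, hNfc, hNgc, ← hA]
      ring
    rw [e0, integral_sub ((mkint2 (pd1 f) v' (pd1_cont hfi hzf) hv'c).const_mul _)
      ((mkint2 (pd1 g) v' (pd1_cont hgi hzg) hv'c).const_mul _),
      integral_const_mul, integral_const_mul,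
      partsB hfi hzf hf0 v v' hv' hv'c, partsB hgi hzg hg0 v v' hv' hv'c]
    unfold ipI
    rw [hIoc, hIoc]
  -- Step: product FTC
  have huIcc : Set.uIcc (-1:ℝ) 1 = Set.Icc (-1:ℝ) 1 := Set.uIcc_of_le (by norm_num)
  have hFTCprod : (∫ t in (-1:ℝ)..1,
        ((starRingEnd ℂ) (W' t) * v' t + (starRingEnd ℂ) (W t) * v'' t))
      = (starRingEnd ℂ) (W 1) * v' 1 - (starRingEnd ℂ) (W (-1)) * v' (-1) := by
    refine intervalIntegral.integral_eq_sub_of_hasDeriv_right_of_le (by norm_num)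
      ((continuous_star.comp hWcont).continuousOn.mul hv'c) (fun t ht => ?_) ?_
    · have htK : t ∈ Set.Icc (-1:ℝ) 1 := ⟨ht.1.le, ht.2.le⟩
      exact ((hWc t).mul ((hv'' t htK).hasDerivAt
        (Icc_mem_nhds ht.1 ht.2))).hasDerivWithinAt
    · apply ContinuousOn.intervalIntegrable
      rw [huIcc]
      exact ((continuous_star.comp hW'cont).continuousOn.mul hv'c).add
        ((continuous_star.comp hWcont).continuousOn.mul hv''cont)
  have hprod' : (∫ t in Set.Ioc (-1:ℝ) 1, (starRingEnd ℂ) (W' t) * v' t)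
      + (∫ t in Set.Ioc (-1:ℝ) 1, (starRingEnd ℂ) (W t) * v'' t)
      = (starRingEnd ℂ) (W 1) * b := by
    rw [← integral_add (mkint2 W' v' hW'cont hv'c) (mkint2 W v'' hWcont hv''cont),
      ← hIoc, hFTCprod, hWm1, map_zero, zero_mul, sub_zero, hb]
  -- Step: expand r
  have hrint : (∫ t in Set.Ioc (-1:ℝ) 1, (starRingEnd ℂ) (W t) * r t)
      = ipI g v * (∫ t in Set.Ioc (-1:ℝ) 1, (starRingEnd ℂ) (W t) * f t)
        + ipI f v * (∫ t in Set.Ioc (-1:ℝ) 1, (starRingEnd ℂ) (W t) * g t)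
        - (∫ t in Set.Ioc (-1:ℝ) 1, (starRingEnd ℂ) (W t) * v'' t) := by
    have e1 : (∫ t in Set.Ioc (-1:ℝ) 1, (starRingEnd ℂ) (W t) * r t)
        = ∫ t in Set.Ioc (-1:ℝ) 1,
            (ipI g v * ((starRingEnd ℂ) (W t) * f t)
              + ipI f v * ((starRingEnd ℂ) (W t) * g t)
              - (starRingEnd ℂ) (W t) * v'' t) := by
      refine setIntegral_congr_fun measurableSet_Ioc (fun t ht => ?_)
      rw [← heq t (Set.Ioc_subset_Icc_self ht)]
      ring
    have h1a : Integrable (fun t => ipI g v * ((starRingEnd ℂ) (W t) * f t))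
        (volume.restrict (Set.Ioc (-1:ℝ) 1)) := (mkint W f hWcont hfi).const_mul _
    have h1b : Integrable (fun t => ipI f v * ((starRingEnd ℂ) (W t) * g t))
        (volume.restrict (Set.Ioc (-1:ℝ) 1)) := (mkint W g hWcont hgi).const_mul _
    have h1 : Integrable (fun t => ipI g v * ((starRingEnd ℂ) (W t) * f t)
        + ipI f v * ((starRingEnd ℂ) (W t) * g t))
        (volume.restrict (Set.Ioc (-1:ℝ) 1)) := h1a.add h1b
    rw [e1, integral_sub h1 (mkint2 W v'' hWcont hv''cont),
      integral_add h1a h1b, integral_const_mul, integral_const_mul]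
  -- final assembly
  rw [show (∫ t in (-1:ℝ)..1, (starRingEnd ℂ) (omegaFn f g t) * r t)
      = ∫ t in Set.Ioc (-1:ℝ) 1, (starRingEnd ℂ) (W t) * r t from hIoc _]
  rw [hrint, hIf, hIg]
  have hfinal := hprod'
  rw [hW'v'] at hfinal
  have : (∫ t in Set.Ioc (-1:ℝ) 1, (starRingEnd ℂ) (W t) * v'' t)
      = (starRingEnd ℂ) (W 1) * b - (A * Ng * (-(ipI f v)) - Nf * (-(ipI g v))) := by
    linear_combination hfinal
  rw [this]
  show b * (starRingEnd ℂ) (W 1) = _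
  ring
end

section
/- If f : ℝ → ℂ is integrable and square-integrable with support contained in [−1, 1], then ∫_ℝ conj(f(x)) f⁽⁻²⁾(x) dx = conj(f₀)(f₀ − f₁) − ∫_{−1}^{1} |f⁽⁻¹⁾(x)|² dx. -/
open MeasureTheory Complex Filter

open Topology

variable {f : ℝ → ℂ}

lemma pd1_sub (hfi : Integrable f) (x y : ℝ) :
    pd1 f y - pd1 f x = ∫ t in x..y, f t :=
  intervalIntegral.integral_Iic_sub_Iic hfi.integrableOn hfi.integrableOn

lemma continuous_pd1 (hfi : Integrable f) : Continuous (pd1 f) := by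
  have h : pd1 f = fun y => pd1 f 0 + ∫ t in (0:ℝ)..y, f t := by
    funext y
    rw [← pd1_sub hfi 0 y]; ring
  rw [h]
  exact continuous_const.add (hfi.continuous_primitive 0)

lemma norm_pd1_le (hfi : Integrable f) (x : ℝ) : ‖pd1 f x‖ ≤ ∫ s, ‖f s‖ := by
  calc ‖pd1 f x‖ ≤ ∫ s in Set.Iic x, ‖f s‖ := norm_integral_le_integral_norm _
  _ ≤ ∫ s, ‖f s‖ := setIntegral_le_integral hfi.norm (Eventually.of_forall fun s => norm_nonneg _)

lemma integrable_id_mul (hfi : Integrable f) (hfc : tsupport f ⊆ Set.Icc (-1 : ℝ) 1) :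
    Integrable (fun s : ℝ => (s : ℂ) * f s) := by
  have key : (fun s : ℝ => (s : ℂ) * f s)
      = fun s : ℝ => ((max (-1) (min 1 s) : ℝ) : ℂ) * f s := by
    funext s
    by_cases h : f s = 0
    · simp [h]
    · have hs : s ∈ Set.Icc (-1 : ℝ) 1 := hfc (subset_tsupport f h)
      have : max (-1) (min 1 s) = s := by
        rw [min_eq_right hs.2, max_eq_right hs.1]
      rw [this]
  rw [key]
  refine Integrable.bdd_mul hfi ?_ (c := 1) (ae_of_all _ fun s => ?_)
  · exact (Complex.continuous_ofReal.comp
      ((continuous_const.max (continuous_const.min continuous_id)))).aestronglyMeasurable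
  · simp only [Complex.norm_real, Real.norm_eq_abs]
    rw [abs_le]
    constructor
    · exact le_max_left _ _
    · exact max_le (by norm_num) (min_le_left _ _)

lemma integrable_sub_mul (hfi : Integrable f) (hfc : tsupport f ⊆ Set.Icc (-1 : ℝ) 1) (y : ℝ) :
    Integrable (fun s : ℝ => ((y : ℂ) - (s : ℂ)) * f s) := by
  have : (fun s : ℝ => ((y : ℂ) - (s : ℂ)) * f s)
      = fun s => (y : ℂ) * f s - (s : ℂ) * f s := by funext s; ring
  rw [this]
  exact (hfi.const_mul _).sub (integrable_id_mul hfi hfc)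

lemma pd2_split (hfi : Integrable f) (hfc : tsupport f ⊆ Set.Icc (-1 : ℝ) 1)
    {x y : ℝ} (hxy : x ≤ y) :
    pd2 f y = pd2 f x + (y - x) • pd1 f x + ∫ s in Set.Ioc x y, ((y : ℂ) - (s : ℂ)) * f s := by
  have hsplit : (∫ s in Set.Iic y, ((y : ℂ) - (s : ℂ)) * f s)
      = (∫ s in Set.Iic x, ((y : ℂ) - (s : ℂ)) * f s)
        + ∫ s in Set.Ioc x y, ((y : ℂ) - (s : ℂ)) * f s := by
    rw [← Set.Iic_union_Ioc_eq_Iic hxy]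
    exact setIntegral_union (Set.Iic_disjoint_Ioc le_rfl) measurableSet_Ioc
      (integrable_sub_mul hfi hfc y).integrableOn (integrable_sub_mul hfi hfc y).integrableOn
  have h2 : (∫ s in Set.Iic x, ((y : ℂ) - (s : ℂ)) * f s)
      = pd2 f x + (y - x) • pd1 f x := by
    have : ∀ s : ℝ, ((y : ℂ) - (s : ℂ)) * f s
        = ((x : ℂ) - (s : ℂ)) * f s + ((y : ℝ) - x) • f s := by
      intro s; rw [Complex.real_smul]; push_cast; ring
    simp_rw [this]
    have h3 : IntegrableOn (fun s : ℝ => ((y:ℝ) - x) • f s) (Set.Iic x) volume :=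
      (hfi.smul ((y:ℝ) - x)).integrableOn
    rw [integral_add (integrable_sub_mul hfi hfc x).integrableOn h3, integral_smul]
    rfl
  show (∫ s in Set.Iic y, ((y : ℂ) - (s : ℂ)) * f s) = _
  rw [hsplit, h2]

lemma norm_setIntegral_bound (hfi : Integrable f) (hfc : tsupport f ⊆ Set.Icc (-1 : ℝ) 1)
    {a b : ℝ} (hab : a ≤ b) (g : ℝ → ℝ) (hg : ∀ s ∈ Set.Ioc a b, ‖((g s : ℂ))‖ ≤ b - a)
    (hgi : Integrable (fun s => ((g s : ℝ) : ℂ) * f s)) :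
    ‖∫ s in Set.Ioc a b, ((g s : ℝ) : ℂ) * f s‖ ≤ (b - a) * ∫ s in Set.Ioc a b, ‖f s‖ := by
  calc ‖∫ s in Set.Ioc a b, ((g s : ℝ) : ℂ) * f s‖
      ≤ ∫ s in Set.Ioc a b, ‖((g s : ℝ) : ℂ) * f s‖ := norm_integral_le_integral_norm _
    _ ≤ ∫ s in Set.Ioc a b, (b - a) * ‖f s‖ := by
        refine setIntegral_mono_on hgi.norm.integrableOn
          (hfi.norm.const_mul _).integrableOn measurableSet_Ioc fun s hs => ?_
        rw [norm_mul]
        have h1 : ‖((g s : ℝ) : ℂ)‖ ≤ b - a := by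
          exact hg s hs
        exact mul_le_mul_of_nonneg_right h1 (norm_nonneg _) |>.trans
          (mul_le_mul_of_nonneg_right le_rfl (norm_nonneg _))
    _ = (b - a) * ∫ s in Set.Ioc a b, ‖f s‖ := integral_const_mul _ _

lemma hasDerivAt_pd2 (hfi : Integrable f) (hfc : tsupport f ⊆ Set.Icc (-1 : ℝ) 1) (x : ℝ) :
    HasDerivAt (pd2 f) (pd1 f x) x := by
  rw [hasDerivAt_iff_isLittleO, Asymptotics.isLittleO_iff]
  intro c hc
  have hcont : Tendsto (fun y => ∫ t in x..y, ‖f t‖) (𝓝 x) (𝓝 0) := by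
    have h1 := (hfi.norm.continuous_primitive x).tendsto x
    simpa using h1
  have h2 : ∀ᶠ y in 𝓝 x, |∫ t in x..y, ‖f t‖| < c := by
    have := Metric.tendsto_nhds.mp hcont c hc
    simpa [Real.dist_eq] using this
  filter_upwards [h2] with y hy
  rcases le_total x y with h | h
  · have herr : pd2 f y - pd2 f x - (y - x) • pd1 f x
        = ∫ s in Set.Ioc x y, ((y : ℂ) - (s : ℂ)) * f s := by
      rw [pd2_split hfi hfc h]; ring
    rw [herr]
    have hb := norm_setIntegral_bound hfi hfc h (fun s => y - s)
      (fun s hs => by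
        simp only [Complex.norm_real, Real.norm_eq_abs]
        rw [_root_.abs_of_nonneg (by linarith [hs.2] : (0:ℝ) ≤ y - s)]
        linarith [hs.1])
      (by push_cast; exact integrable_sub_mul hfi hfc y)
    have hIoc : (∫ s in Set.Ioc x y, ‖f s‖) ≤ c := by
      rw [← intervalIntegral.integral_of_le h]
      exact (le_abs_self _).trans hy.le
    calc ‖∫ s in Set.Ioc x y, ((y : ℂ) - (s : ℂ)) * f s‖
        ≤ (y - x) * ∫ s in Set.Ioc x y, ‖f s‖ := by push_cast at hb ⊢; exact hb
      _ ≤ (y - x) * c := by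
          refine mul_le_mul_of_nonneg_left hIoc (by linarith)
      _ ≤ c * ‖y - x‖ := by
          rw [Real.norm_eq_abs, _root_.abs_of_nonneg (by linarith : (0:ℝ) ≤ y - x), mul_comm]
  · have hp1 : pd1 f x = pd1 f y + ∫ s in Set.Ioc y x, f s := by
      have h3 := pd1_sub hfi y x
      rw [intervalIntegral.integral_of_le h] at h3
      rw [← h3]; ring
    have e1 : ((x : ℝ) - y) • (∫ s in Set.Ioc y x, f s)
          - (∫ s in Set.Ioc y x, ((x : ℂ) - (s : ℂ)) * f s)
        = ∫ s in Set.Ioc y x, ((s : ℂ) - (y : ℂ)) * f s := by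
      have hsm : IntegrableOn (fun s : ℝ => ((x:ℝ) - y) • f s) (Set.Ioc y x) volume :=
        (hfi.smul ((x:ℝ) - y)).integrableOn
      rw [← integral_smul, ← integral_sub hsm (integrable_sub_mul hfi hfc x).integrableOn]
      refine integral_congr_ae (Filter.Eventually.of_forall fun s => ?_)
      simp only [Complex.real_smul, Complex.ofReal_sub]
      ring
    have herr : pd2 f y - pd2 f x - (y - x) • pd1 f x
        = ∫ s in Set.Ioc y x, ((s : ℂ) - (y : ℂ)) * f s := by
      rw [pd2_split hfi hfc h (x := y) (y := x), hp1, ← e1]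
      simp only [Complex.real_smul, Complex.ofReal_sub]
      ring
    rw [herr]
    have hb := norm_setIntegral_bound hfi hfc h (fun s => s - y)
      (fun s hs => by
        simp only [Complex.norm_real, Real.norm_eq_abs]
        rw [_root_.abs_of_nonneg (by linarith [hs.1] : (0:ℝ) ≤ s - y)]
        linarith [hs.2])
      (by
        have h6 : Integrable (fun s : ℝ => ((s : ℂ) - (y : ℂ)) * f s) := by
          refine (integrable_sub_mul hfi hfc y).neg.congr
            (Filter.Eventually.of_forall fun s => ?_)
          simp only [Pi.neg_apply]; ring
        push_cast
        exact h6)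
    have hIoc : (∫ s in Set.Ioc y x, ‖f s‖) ≤ c := by
      have h4 : (∫ t in x..y, ‖f t‖) = - ∫ s in Set.Ioc y x, ‖f s‖ := by
        rw [intervalIntegral.integral_of_ge h]
      have h5 : |∫ s in Set.Ioc y x, ‖f s‖| < c := by
        rw [h4, abs_neg] at hy; exact hy
      exact (le_abs_self _).trans h5.le
    calc ‖∫ s in Set.Ioc y x, ((s : ℂ) - (y : ℂ)) * f s‖
        ≤ (x - y) * ∫ s in Set.Ioc y x, ‖f s‖ := by push_cast at hb ⊢; exact hb
      _ ≤ (x - y) * c := mul_le_mul_of_nonneg_left hIoc (by linarith)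
      _ ≤ c * ‖y - x‖ := by
          rw [Real.norm_eq_abs, abs_of_nonpos (by linarith : y - x ≤ 0), mul_comm]
          simp [neg_sub]

lemma integrable_conj' (hfi : Integrable f) :
    Integrable (fun x => (starRingEnd ℂ) (f x)) :=
  (Complex.conjCLE.toContinuousLinearMap).integrable_comp hfi

lemma integral_pd1 (hfi : Integrable f) (hfc : tsupport f ⊆ Set.Icc (-1 : ℝ) 1) (s : ℝ) :
    ∫ u in s..1, pd1 f u = pd2 f 1 - pd2 f s :=
  intervalIntegral.integral_eq_sub_of_hasDerivAt (fun u _ => hasDerivAt_pd2 hfi hfc u)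
    ((continuous_pd1 hfi).intervalIntegrable s 1)

lemma continuous_pd2 (hfi : Integrable f) (hfc : tsupport f ⊆ Set.Icc (-1 : ℝ) 1) :
    Continuous (pd2 f) :=
  continuous_iff_continuousAt.2 fun x => (hasDerivAt_pd2 hfi hfc x).continuousAt

lemma integrable_conj_mul_pd2 (hfi : Integrable f) (hfc : tsupport f ⊆ Set.Icc (-1 : ℝ) 1) :
    Integrable (fun x => (starRingEnd ℂ) (f x) * pd2 f x) := by
  obtain ⟨C, hC⟩ := (isCompact_Icc (a := (-1:ℝ)) (b := 1)).exists_bound_of_continuousOn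
    (continuous_pd2 hfi hfc).continuousOn
  set g : ℝ → ℂ := fun x => pd2 f (max (-1) (min 1 x)) with hg
  have hclamp : ∀ x : ℝ, max (-1) (min 1 x) ∈ Set.Icc (-1:ℝ) 1 :=
    fun x => ⟨le_max_left _ _, max_le (by norm_num) (min_le_left _ _)⟩
  have hgb : ∀ x, ‖g x‖ ≤ C := fun x => hC _ (hclamp x)
  have hgc : Continuous g := (continuous_pd2 hfi hfc).comp
    (continuous_const.max (continuous_const.min continuous_id))
  have hint : Integrable (fun x => g x * (starRingEnd ℂ) (f x)) :=
    Integrable.bdd_mul (integrable_conj' hfi) hgc.aestronglyMeasurable (ae_of_all _ hgb)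
  refine hint.congr (Eventually.of_forall fun x => ?_)
  by_cases hx : f x = 0
  · simp [hx]
  · have hxm : x ∈ Set.Icc (-1:ℝ) 1 := hfc (subset_tsupport f hx)
    have : max (-1) (min 1 x) = x := by rw [min_eq_right hxm.2, max_eq_right hxm.1]
    rw [hg]; simp only [this]; ring

theorem ip_f_pd2_f
    (f : ℝ → ℂ)
    (hfi : Integrable f) (hf2 : MemLp f 2)
    (hfc : tsupport f ⊆ Set.Icc (-1 : ℝ) 1) :
    (∫ x : ℝ, (starRingEnd ℂ) (f x) * pd2 f x)
      = (starRingEnd ℂ) (∫ y : ℝ, f y) * ((∫ y : ℝ, f y) - (∫ y : ℝ, (y : ℂ) * f y))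
        - ((∫ x in (-1 : ℝ)..1, ‖pd1 f x‖ ^ 2 : ℝ) : ℂ) := by
  classical
  set S : Set (ℝ × ℝ) := {p : ℝ × ℝ | p.1 ∈ Set.Ioc (-1:ℝ) 1 ∧ p.2 ≤ p.1} with hSdef
  have hS : MeasurableSet S :=
    (measurable_fst measurableSet_Ioc).inter (measurableSet_le measurable_snd measurable_fst)
  set F : ℝ → ℝ → ℂ :=
    fun x s => S.indicator (fun p => (starRingEnd ℂ) (f p.2) * pd1 f p.1) (x, s) with hFdef
  -- integrability on the product
  have hG : AEStronglyMeasurable (fun p : ℝ × ℝ => (starRingEnd ℂ) (f p.2) * pd1 f p.1)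
      (volume.prod volume) :=
    ((integrable_conj' hfi).aestronglyMeasurable.comp_snd).mul
      ((continuous_pd1 hfi).aestronglyMeasurable.comp_fst)
  have hFint : Integrable (Function.uncurry F) (volume.prod volume) := by
    have hbnd : Integrable (fun p : ℝ × ℝ =>
        (Set.Ioc (-1:ℝ) 1).indicator (fun _ => (∫ s, ‖f s‖)) p.1 * ‖f p.2‖)
        (volume.prod volume) := by
      refine Integrable.mul_prod ?_ hfi.norm
      rw [integrable_indicator_iff measurableSet_Ioc]
      exact integrableOn_const measure_Ioc_lt_top.ne
    refine hbnd.mono' (hG.indicator hS) (Eventually.of_forall fun p => ?_)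
    by_cases hp : p ∈ S
    · have h1 : Function.uncurry F p = (starRingEnd ℂ) (f p.2) * pd1 f p.1 := by
        simp only [Function.uncurry, hFdef, Set.indicator_of_mem hp]
      rw [h1, Set.indicator_of_mem hp.1]
      rw [norm_mul, RCLike.norm_conj]
      calc ‖f p.2‖ * ‖pd1 f p.1‖ ≤ ‖f p.2‖ * ∫ s, ‖f s‖ :=
            mul_le_mul_of_nonneg_left (norm_pd1_le hfi _) (norm_nonneg _)
        _ = (∫ s, ‖f s‖) * ‖f p.2‖ := mul_comm _ _
    · have h1 : Function.uncurry F p = 0 := by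
        simp only [Function.uncurry, hFdef, Set.indicator_of_notMem hp]
      rw [h1, norm_zero]
      have h2 : (0:ℝ) ≤ (Set.Ioc (-1:ℝ) 1).indicator (fun _ => (∫ s, ‖f s‖)) p.1 :=
        Set.indicator_nonneg (fun _ _ => integral_nonneg fun s => norm_nonneg _) _
      exact mul_nonneg h2 (norm_nonneg _)
  have hswap : ∫ x, ∫ s, F x s = ∫ s, ∫ x, F x s := integral_integral_swap hFint
  -- side A
  have hA : ∀ x, (∫ s, F x s)
      = Set.indicator (Set.Ioc (-1:ℝ) 1) (fun x => ((‖pd1 f x‖^2 : ℝ) : ℂ)) x := by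
    intro x
    by_cases hx : x ∈ Set.Ioc (-1:ℝ) 1
    · rw [Set.indicator_of_mem hx]
      have h1 : ∀ s, F x s
          = Set.indicator (Set.Iic x) (fun s => (starRingEnd ℂ) (f s) * pd1 f x) s := by
        intro s
        obtain ⟨hx1, hx2⟩ := hx
        simp [hFdef, Set.indicator_apply, hSdef, hx1, hx2, Set.mem_Iic]
      rw [integral_congr_ae (Eventually.of_forall h1), integral_indicator measurableSet_Iic,
        integral_mul_const, integral_conj]
      exact_mod_cast RCLike.conj_mul (pd1 f x)
    · have h1 : ∀ s, F x s = 0 := by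
        intro s
        exact Set.indicator_of_notMem (fun hmem => hx hmem.1) _
      rw [Set.indicator_of_notMem hx, integral_congr_ae (Eventually.of_forall h1),
        integral_zero]
  -- side B
  have hB : ∀ s, (∫ x, F x s) = (starRingEnd ℂ) (f s) * (pd2 f 1 - pd2 f s) := by
    intro s
    by_cases hfs : f s = 0
    · have h1 : ∀ x, F x s = 0 := by
        intro x
        simp [hFdef, Set.indicator_apply, hfs]
      rw [integral_congr_ae (Eventually.of_forall h1), integral_zero, hfs]
      simp
    · have hs : s ∈ Set.Icc (-1:ℝ) 1 := hfc (subset_tsupport f hfs)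
      have h1 : ∀ x, F x s = Set.indicator (Set.Ioc (-1:ℝ) 1 ∩ Set.Ici s)
          (fun x => (starRingEnd ℂ) (f s) * pd1 f x) x := by
        intro x
        simp [hFdef, Set.indicator_apply, hSdef, Set.mem_inter_iff, Set.mem_Ici, and_comm]
      rw [integral_congr_ae (Eventually.of_forall h1),
        integral_indicator (measurableSet_Ioc.inter measurableSet_Ici)]
      have hae : (Set.Ioc (-1:ℝ) 1 ∩ Set.Ici s : Set ℝ) =ᵐ[volume] Set.Ioc s 1 := by
        have hsub1 : (Set.Ioc (-1:ℝ) 1 ∩ Set.Ici s) \ Set.Ioc s 1 ⊆ {s} := by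
          rintro x ⟨⟨⟨hx1, hx2⟩, hx3⟩, hx4⟩
          simp only [Set.mem_Ioc, not_and, not_lt, Set.mem_Ici] at hx4 ⊢
          have : ¬ s < x := fun hlt => by have := hx4 hlt; linarith
          have : x = s := le_antisymm (not_lt.1 this) hx3
          simp [this]
        have hsub2 : Set.Ioc s 1 \ (Set.Ioc (-1:ℝ) 1 ∩ Set.Ici s) = ∅ := by
          ext x
          simp only [Set.mem_diff, Set.mem_Ioc, Set.mem_inter_iff, Set.mem_Ici,
            Set.mem_empty_iff_false, iff_false]
          rintro ⟨⟨hx1, hx2⟩, hx3⟩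
          exact hx3 ⟨⟨lt_of_le_of_lt hs.1 hx1, hx2⟩, hx1.le⟩
        exact MeasureTheory.ae_eq_set.2
          ⟨measure_mono_null hsub1 (measure_singleton s),
           by rw [hsub2]; exact measure_empty⟩
      rw [setIntegral_congr_set hae, integral_const_mul,
        ← intervalIntegral.integral_of_le hs.2, integral_pd1 hfi hfc s]
  -- assemble
  have castA : ((∫ x in (-1 : ℝ)..1, ‖pd1 f x‖ ^ 2 : ℝ) : ℂ) = ∫ x : ℝ, ∫ s : ℝ, F x s := by
    have c1 : ∫ x : ℝ, ∫ s : ℝ, F x s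
        = ∫ x : ℝ, Set.indicator (Set.Ioc (-1:ℝ) 1) (fun x => ((‖pd1 f x‖^2 : ℝ) : ℂ)) x :=
      integral_congr_ae (Eventually.of_forall hA)
    rw [c1, integral_indicator measurableSet_Ioc,
      intervalIntegral.integral_of_le (by norm_num : (-1:ℝ) ≤ 1)]
    exact (integral_ofReal (f := fun x => ‖pd1 f x‖ ^ 2) (𝕜 := ℂ)).symm
  have hBv : ∫ s : ℝ, ∫ x : ℝ, F x s
      = (starRingEnd ℂ) (∫ y : ℝ, f y) * pd2 f 1
        - ∫ x : ℝ, (starRingEnd ℂ) (f x) * pd2 f x := by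
    rw [integral_congr_ae (Eventually.of_forall hB)]
    have h1 : Integrable (fun s => (starRingEnd ℂ) (f s) * pd2 f 1) :=
      (integrable_conj' hfi).mul_const _
    have h2 := integrable_conj_mul_pd2 hfi hfc
    calc ∫ s : ℝ, (starRingEnd ℂ) (f s) * (pd2 f 1 - pd2 f s)
        = ∫ s : ℝ, ((starRingEnd ℂ) (f s) * pd2 f 1 - (starRingEnd ℂ) (f s) * pd2 f s) := by
          congr 1; funext s; ring
      _ = (∫ s : ℝ, (starRingEnd ℂ) (f s) * pd2 f 1)
            - ∫ s : ℝ, (starRingEnd ℂ) (f s) * pd2 f s := integral_sub h1 h2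
      _ = (starRingEnd ℂ) (∫ y : ℝ, f y) * pd2 f 1
            - ∫ x : ℝ, (starRingEnd ℂ) (f x) * pd2 f x := by
          rw [integral_mul_const, integral_conj]
  have hpd21 : pd2 f 1 = (∫ y : ℝ, f y) - ∫ y : ℝ, (y:ℂ) * f y := by
    have hz : ∀ s, s ∉ Set.Iic (1:ℝ) → (((1:ℝ):ℂ) - (s:ℂ)) * f s = 0 := by
      intro s hsn
      have hf0 : f s = 0 :=
        image_eq_zero_of_notMem_tsupport (fun hmem => hsn (Set.mem_Iic.2 (hfc hmem).2))
      simp [hf0]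
    have : pd2 f 1 = ∫ s in Set.Iic (1:ℝ), (((1:ℝ):ℂ) - (s:ℂ)) * f s := rfl
    rw [this, setIntegral_eq_integral_of_forall_compl_eq_zero hz]
    calc ∫ s : ℝ, (((1:ℝ):ℂ) - (s:ℂ)) * f s
        = ∫ s : ℝ, (f s - (s:ℂ) * f s) := by congr 1; funext s; push_cast; ring
      _ = (∫ s : ℝ, f s) - ∫ s : ℝ, (s:ℂ) * f s := integral_sub hfi (integrable_id_mul hfi hfc)
  have key : ((∫ x in (-1 : ℝ)..1, ‖pd1 f x‖ ^ 2 : ℝ) : ℂ)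
      = (starRingEnd ℂ) (∫ y : ℝ, f y) * ((∫ y : ℝ, f y) - ∫ y : ℝ, (y:ℂ) * f y)
        - ∫ x : ℝ, (starRingEnd ℂ) (f x) * pd2 f x := by
    rw [castA, hswap, hBv, hpd21]
  linear_combination key
end
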